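/- Let θ ∈ ℝ^d with θ_d ≠ 0, B = B(θ) the companion matrix, and Ĩ_d = e₁e₁ᵀ where e₁ is the first standard unit vector in ℝ^d. Then the symmetric positive semidefinite matrix ∑_{j=1}^{d} B^{-j} Ĩ_d (B^{-j})ᵀ is positive definite. -/

import Mathlib

/-!
With `e₀` the first basis vector, the sum is `∑ⱼ vⱼ vⱼᵀ` for `vⱼ = B⁻ʲ e₀`, which is positive
definite as soon as no nonzero `x` is orthogonal to every `vⱼ`. Applying `Bᵈ`, this amounts to
the Krylov vectors `Bᵏ e₀ = Bᵈ v_{d-k}`, `0 ≤ k < d`, spanning; they do because `B` shifts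
coordinates down, so `Bᵏ e₀` has entry `1` in position `k` and zeros below it. `B` is invertible
because `det B = ±θ_d`.
-/

open Matrix
open scoped ComplexOrder

namespace Matrix

theorem posDef_sum_vecMulVec_self_star {ι n 𝕜 : Type*} [Fintype n] [RCLike 𝕜] (s : Finset ι)
    (v : ι → n → 𝕜) (hv : ∀ x, (∀ i ∈ s, star (v i) ⬝ᵥ x = 0) → x = 0) :
    (∑ i ∈ s, vecMulVec (v i) (star (v i))).PosDef := by
  have hpsd := posSemidef_sum s fun i _ => posSemidef_vecMulVec_self_star (v i)
  refine .of_dotProduct_mulVec_pos hpsd.1 fun x hx => ?_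
  have hform : star x ⬝ᵥ ((∑ i ∈ s, vecMulVec (v i) (star (v i))) *ᵥ x) =
      ((∑ i ∈ s, ‖star (v i) ⬝ᵥ x‖ ^ 2 : ℝ) : 𝕜) := by
    simp only [sum_mulVec, dotProduct_sum, vecMulVec_mulVec, dotProduct_smul, RCLike.ofReal_sum]
    refine Finset.sum_congr rfl fun i _ => ?_
    rw [op_smul_eq_mul, star_dotProduct x, RCLike.star_def, RCLike.conj_mul, RCLike.ofReal_pow]
  obtain ⟨i, hi, hne⟩ : ∃ i ∈ s, star (v i) ⬝ᵥ x ≠ 0 := by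
    by_contra! h
    exact hx (hv x h)
  rw [hform, RCLike.ofReal_pos]
  exact Finset.sum_pos' (fun _ _ => by positivity) ⟨i, hi, by positivity⟩

theorem mul_single_one_mul_conjTranspose {m α : Type*} [Fintype m] [DecidableEq m]
    [Semiring α] [StarRing α] (M : Matrix m m α) (i : m) :
    M * single i i (1 : α) * Mᴴ = vecMulVec (M.col i) (star (M.col i)) := by
  rw [single_eq_single_vecMulVec_single, mul_vecMulVec, vecMulVec_mul, mulVec_single_one,
    single_one_vecMul]
  rfl

variable {n : ℕ}

section CommRing

variable {R : Type*} [CommRing R]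

def companion (θ : Fin (n + 1) → R) : Matrix (Fin (n + 1)) (Fin (n + 1)) R :=
  of fun i j => if i = 0 then θ j else if (i : ℕ) = (j : ℕ) + 1 then 1 else 0

variable (θ : Fin (n + 1) → R)

theorem companion_apply (i j : Fin (n + 1)) :
    companion θ i j = if i = 0 then θ j else if (i : ℕ) = (j : ℕ) + 1 then 1 else 0 := rfl

theorem companion_mul_apply_succ (M : Matrix (Fin (n + 1)) (Fin (n + 1)) R) (i : Fin n)
    (j : Fin (n + 1)) : (companion θ * M) i.succ j = M i.castSucc j := by
  rw [mul_apply, Finset.sum_eq_single i.castSucc]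
  · simp [companion_apply]
  · intro l _ hl
    rw [Ne, Fin.ext_iff, Fin.val_castSucc] at hl
    rw [companion_apply, if_neg (Fin.succ_ne_zero i), if_neg (by simp; omega), zero_mul]
  · simp

theorem companion_pow_apply_zero {k : ℕ} {i : Fin (n + 1)} (hki : k ≤ i) :
    (companion θ ^ k) i 0 = if (i : ℕ) = k then 1 else 0 := by
  induction k generalizing i with
  | zero => simp only [pow_zero, one_apply, Fin.ext_iff, Fin.val_zero]
  | succ k ih =>
    obtain ⟨i, rfl⟩ := Fin.exists_succ_eq.mpr (by rintro rfl; simp at hki : i ≠ 0)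
    rw [pow_succ', companion_mul_apply_succ, ih (by simp at hki ⊢; omega)]
    simp

theorem det_companion : (companion θ).det = (-1) ^ n * θ (Fin.last n) := by
  rw [det_succ_column _ (Fin.last n), Fin.sum_univ_succ, Finset.sum_eq_zero]
  · have hminor : (companion θ).submatrix Fin.succ Fin.castSucc = 1 := by
      ext i j
      simp [companion_apply, one_apply, Fin.ext_iff]
    simp [hminor, companion_apply]
  · intro i _
    simp [companion_apply, i.isLt.ne]

theorem eq_zero_of_forall_dotProduct_companion_pow_col_eq_zero {w : Fin (n + 1) → R}
    (hw : ∀ k ≤ n, w ⬝ᵥ (companion θ ^ k).col 0 = 0) : w = 0 := by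
  let krylov : Matrix (Fin (n + 1)) (Fin (n + 1)) R := of fun i k => (companion θ ^ (k : ℕ)) i 0
  have htri : krylov.IsUpperTriangular := fun i k (hki : k < i) => by
    simp only [krylov, of_apply]
    rw [companion_pow_apply_zero θ hki.le, if_neg (by omega)]
  have hdet : krylov.det = 1 := by
    simp [det_of_isUpperTriangular htri, krylov, companion_pow_apply_zero]
  refine vecMul_injective_of_isUnit ((isUnit_iff_isUnit_det krylov).mpr (hdet ▸ isUnit_one)) ?_
  show w ᵥ* krylov = 0 ᵥ* krylov
  rw [zero_vecMul]
  exact funext fun k => hw k k.is_le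

end CommRing

theorem eq_zero_of_forall_dotProduct_companion_inv_pow_col_eq_zero {F : Type*} [Field F]
    {θ : Fin (n + 1) → F} (hθ : θ (Fin.last n) ≠ 0) {x : Fin (n + 1) → F}
    (hx : ∀ j ∈ Finset.Icc 1 (n + 1), x ⬝ᵥ ((companion θ)⁻¹ ^ j).col 0 = 0) : x = 0 := by
  set C := companion θ
  have hdet : IsUnit C.det := by simp [C, det_companion, hθ]
  have hpow : ∀ k ≤ n + 1, C⁻¹ ^ (n + 1) * C ^ k = C⁻¹ ^ (n + 1 - k) := fun k hk => by
    rw [← pow_sub_mul_pow C⁻¹ hk, mul_assoc, inv_pow' C k,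
      nonsing_inv_mul _ (det_pow C k ▸ hdet.pow k), mul_one]
  have hw : x ᵥ* C⁻¹ ^ (n + 1) = 0 := by
    refine eq_zero_of_forall_dotProduct_companion_pow_col_eq_zero θ fun k hk => ?_
    rw [← dotProduct_mulVec, ← mulVec_single_one, mulVec_mulVec, hpow k (by omega),
      mulVec_single_one]
    exact hx _ (Finset.mem_Icc.mpr ⟨by omega, by omega⟩)
  have hunit : IsUnit (C⁻¹ ^ (n + 1)) :=
    (isUnit_nonsing_inv_iff.mpr ((isUnit_iff_isUnit_det C).mpr hdet)).pow _
  exact vecMul_injective_of_isUnit hunit (show x ᵥ* _ = 0 ᵥ* _ by rw [hw, zero_vecMul])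

end Matrix

/-- with `Ĩ_d = e₁ e₁ᵀ`, the symmetric positive semidefinite matrix
`∑_{j=1}^{d} B^{-j} Ĩ_d (B^{-j})ᵀ` is positive definite (`d = n+1`). -/
theorem companion_sum_posDef (n : ℕ) (θ : Fin (n+1) → ℝ)
    (hθ : θ (Fin.last n) ≠ 0)
    (B : Matrix (Fin (n+1)) (Fin (n+1)) ℝ)
    (hB : ∀ i j : Fin (n+1),
      B i j = if i = 0 then θ j else if (i : ℕ) = (j : ℕ) + 1 then 1 else 0) :
    (∑ j ∈ Finset.Icc 1 (n+1),
        B⁻¹ ^ j * Matrix.single (0 : Fin (n+1)) (0 : Fin (n+1)) (1 : ℝ)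
          * (B⁻¹ ^ j)ᵀ).PosDef := by
  obtain rfl : B = companion θ := ext hB
  simp_rw [← conjTranspose_eq_transpose_of_trivial, mul_single_one_mul_conjTranspose]
  refine posDef_sum_vecMulVec_self_star _ _ fun x hx =>
    eq_zero_of_forall_dotProduct_companion_inv_pow_col_eq_zero hθ fun j hj => ?_
  simpa [dotProduct_comm] using hx j hj
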